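/- The solution of the orthogonal Procrustes problem: for matrices A ∈ ℂ^{k×n} with SVD A = UΣV^H (U ∈ ℂ^{k×k}, V ∈ ℂ^{n×n} unitary, Σ with nonnegative diagonal), the matrix Ω = U·[I_k | 0]·V^H maximizes Re(Trace(Ω^H A)) over all matrices Ω ∈ ℂ^{k×n} with Ω Ω^H = I_k. -/

import Mathlib

open Matrix

lemma trace_form_aux {k n : ℕ} (hkn : k ≤ n)
    (σ : Fin k → ℝ)
    (Sm : Matrix (Fin k) (Fin n) ℂ)
    (hS : ∀ i j, Sm i j = if (i : ℕ) = (j : ℕ) then (σ i : ℂ) else 0)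
    (W : Matrix (Fin k) (Fin n) ℂ) :
    (Wᴴ * Sm).trace = ∑ i : Fin k, (starRingEnd ℂ) (W i (Fin.castLE hkn i)) * (σ i : ℂ) := by
  rw [Matrix.trace]
  simp only [Matrix.diag, Matrix.mul_apply, Matrix.conjTranspose_apply]
  rw [Finset.sum_comm]
  refine Finset.sum_congr rfl fun i _ => ?_
  rw [Finset.sum_eq_single (Fin.castLE hkn i)]
  · rw [hS]; simp
  · intro j _ hj
    rw [hS]
    have : (i:ℕ) ≠ (j:ℕ) := by
      intro h; apply hj; ext; simp [← h]
    simp [this]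
  · simp

lemma procrustes_aux {k n : ℕ} (hkn : k ≤ n)
    (σ : Fin k → ℝ) (hσ : ∀ i, 0 ≤ σ i)
    (Sm : Matrix (Fin k) (Fin n) ℂ)
    (hS : ∀ i j, Sm i j = if (i : ℕ) = (j : ℕ) then (σ i : ℂ) else 0)
    (W : Matrix (Fin k) (Fin n) ℂ) (hW : W * Wᴴ = 1) :
    ((Wᴴ * Sm).trace).re ≤ ∑ i, σ i := by
  rw [trace_form_aux hkn σ Sm hS W, Complex.re_sum]
  apply Finset.sum_le_sum
  intro i _
  have hrow : ∑ j : Fin n, Complex.normSq (W i j) = 1 := by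
    have h := congrFun (congrFun hW i) i
    simp only [Matrix.mul_apply, Matrix.conjTranspose_apply, Matrix.one_apply_eq] at h
    have h2 : ∑ j : Fin n, Complex.normSq (W i j) = (∑ j : Fin n, W i j * star (W i j)).re := by
      rw [Complex.re_sum]
      refine Finset.sum_congr rfl fun j _ => ?_
      rw [show star (W i j) = (starRingEnd ℂ) (W i j) from rfl, Complex.mul_conj]
      simp
    rw [h2, h]
    simp
  have hle1 : ‖W i (Fin.castLE hkn i)‖ ≤ 1 := by
    have h1 : Complex.normSq (W i (Fin.castLE hkn i)) ≤ 1 := by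
      rw [← hrow]
      exact Finset.single_le_sum (fun j _ => Complex.normSq_nonneg _) (Finset.mem_univ _)
    nlinarith [Complex.sq_norm (W i (Fin.castLE hkn i)), norm_nonneg (W i (Fin.castLE hkn i))]
  have hre : ((starRingEnd ℂ) (W i (Fin.castLE hkn i)) * (σ i : ℂ)).re
      = (W i (Fin.castLE hkn i)).re * σ i := by
    simp [Complex.mul_re]
  rw [hre]
  have hra := Complex.re_le_norm (W i (Fin.castLE hkn i))
  nlinarith [hσ i]

/-- Orthogonal Procrustes: if `A = U Σ Vᴴ` is an SVD of `A ∈ ℂ^{k×n}` (with `U, V`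
unitary and `S` rectangular-diagonal with nonnegative real entries `σ`), then
`Ω₀ = U·[I_k | 0]·Vᴴ` maximizes `Re(tr(Ωᴴ A))` over all `Ω` with `Ω Ωᴴ = I_k`. -/
theorem stmt_5 {k n : ℕ} (hkn : k ≤ n)
    (A : Matrix (Fin k) (Fin n) ℂ)
    (U : Matrix (Fin k) (Fin k) ℂ) (V : Matrix (Fin n) (Fin n) ℂ)
    (hU : U * Uᴴ = 1 ∧ Uᴴ * U = 1) (hV : V * Vᴴ = 1 ∧ Vᴴ * V = 1)
    (σ : Fin k → ℝ) (hσ : ∀ i, 0 ≤ σ i)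
    (Sm : Matrix (Fin k) (Fin n) ℂ)
    (hS : ∀ i j, Sm i j = if (i : ℕ) = (j : ℕ) then (σ i : ℂ) else 0)
    (hA : A = U * Sm * Vᴴ)
    (E : Matrix (Fin k) (Fin n) ℂ)
    (hE : ∀ i j, E i j = if (i : ℕ) = (j : ℕ) then 1 else 0) :
    ∀ Ω : Matrix (Fin k) (Fin n) ℂ, Ω * Ωᴴ = 1 →
      ((Ωᴴ * A).trace).re ≤ (((U * E * Vᴴ)ᴴ * A).trace).re := by
  intro Ω hΩ
  have htr : ∀ M : Matrix (Fin k) (Fin n) ℂ,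
      (Mᴴ * A).trace = (((Uᴴ * M * V)ᴴ) * Sm).trace := by
    intro M
    rw [hA]
    have h1 : ((Uᴴ * M * V)ᴴ) * Sm = Vᴴ * (Mᴴ * (U * Sm)) := by
      simp [Matrix.conjTranspose_mul, Matrix.mul_assoc]
    rw [h1, Matrix.trace_mul_comm, Matrix.mul_assoc, ← Matrix.mul_assoc Vᴴ,
      Matrix.trace_mul_comm (Vᴴ * Mᴴ)]
  rw [htr Ω, htr (U * E * Vᴴ)]
  have hEq : Uᴴ * (U * E * Vᴴ) * V = E := by
    have : Uᴴ * (U * E * Vᴴ) * V = (Uᴴ * U) * (E * (Vᴴ * V)) := by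
      simp [Matrix.mul_assoc]
    rw [this, hU.2, hV.2]
    simp
  rw [hEq]
  have hRHS : ((Eᴴ * Sm).trace).re = ∑ i, σ i := by
    rw [trace_form_aux hkn σ Sm hS E, Complex.re_sum]
    refine Finset.sum_congr rfl fun i _ => ?_
    simp [hE]
  rw [hRHS]
  have hWW : (Uᴴ * Ω * V) * (Uᴴ * Ω * V)ᴴ = 1 := by
    simp only [Matrix.conjTranspose_mul, Matrix.conjTranspose_conjTranspose]
    have h2 : Uᴴ * Ω * V * (Vᴴ * (Ωᴴ * U)) = Uᴴ * (Ω * ((V * Vᴴ) * (Ωᴴ * U))) := by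
      simp [Matrix.mul_assoc]
    rw [h2, hV.1, Matrix.one_mul, ← Matrix.mul_assoc Ω, hΩ, Matrix.one_mul, hU.2]
  exact procrustes_aux hkn σ hσ Sm hS _ hWW
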